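/- Let Q be a quiver, G a group, and δ: Q₁ → G an arrow weighting determining a G-grading of the path coalgebra kQ. The linear map E: kQ ⋊ kG → k(Q ⋊ G) sending p ⋊ g, for a path p = a_n⋯a₂a₁ and g ∈ G, to the path (a_n ⋊ δ(a_{n-1}⋯a₁)g)⋯(a₂ ⋊ δ(a₁)g)(a₁ ⋊ g) in the smash coproduct quiver (and x ⋊ g to the vertex x ⋊ g), is an isomorphism of coalgebras. -/

import Mathlib

open TensorProduct Quiver

noncomputable section
open scoped Classical

universe u v

variable (k : Type*) [Field k]

/-- The set of all paths in a quiver, with endpoints bundled. -/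
abbrev PathsIn (V : Type u) [Quiver.{v + 1} V] : Type (max u (v + 1)) := Σ a b : V, Quiver.Path a b

/-- The underlying vector space of the path coalgebra: the free `k`-module on paths. -/
abbrev PathCoalg (V : Type u) [Quiver.{v + 1} V] : Type _ := PathsIn V →₀ k

variable {V : Type u} [Quiver.{v + 1} V]

/-- The basis vector corresponding to a path. -/
def ιp (t : PathsIn V) : PathCoalg k V := Finsupp.single t 1

/-- The linear map on the path coalgebra induced by appending the arrow `e` to
paths ending at the source of `e` (and killing all other paths). -/
def consMap {b c : V} (e : b ⟶ c) : PathCoalg k V →ₗ[k] PathCoalg k V :=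
  Finsupp.lsum k fun t =>
    if h : t.2.1 = b then Finsupp.lsingle ⟨t.1, c, (h ▸ t.2.2).cons e⟩ else 0

/-- Comultiplication on basis paths:
`Δ(p) = Σ_{p = p₂p₁} p₂ ⊗ p₁ + t(p) ⊗ p + p ⊗ s(p)`, i.e. the sum of
`(second segment) ⊗ (first segment)` over all (possibly trivial) decompositions. -/
def deltaAux : ∀ {a b : V}, Quiver.Path a b → PathCoalg k V ⊗[k] PathCoalg k V
  | a, _, .nil => ιp k ⟨a, a, .nil⟩ ⊗ₜ[k] ιp k ⟨a, a, .nil⟩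
  | a, c, .cons p e =>
      ιp k ⟨c, c, .nil⟩ ⊗ₜ[k] ιp k ⟨a, c, p.cons e⟩
      + TensorProduct.map (consMap k e) LinearMap.id (deltaAux p)

/-- The comultiplication of the path coalgebra. -/
def ΔP : PathCoalg k V →ₗ[k] PathCoalg k V ⊗[k] PathCoalg k V :=
  Finsupp.lsum k fun t => LinearMap.toSpanSingleton k _ (deltaAux k t.2.2)

/-- The counit of the path coalgebra: `ε(p) = δ_{|p|,0}`. -/
def εP : PathCoalg k V →ₗ[k] k :=
  Finsupp.lsum k fun t => if t.2.2.length = 0 then LinearMap.id else 0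

variable {G : Type*} [Group G]

/-- The multiplicative extension of an arrow weighting `δ : Q₁ → G` to paths:
`δ(a_n ⋯ a_1) = δ(a_n) ⋯ δ(a_1)`, with value `1` on length-zero paths. -/
def wt (δ : ∀ {a b : V}, (a ⟶ b) → G) : ∀ {a b : V}, Quiver.Path a b → G
  | _, _, .nil => 1
  | _, _, .cons p e => δ e * wt @δ p

/-- The underlying vector space of the smash coproduct coalgebra `kQ ⋊ kG`:
the free `k`-module on symbols `p ⋊ g`. -/
abbrev SmashCoalg (V : Type u) [Quiver.{v + 1} V] (G : Type*) : Type _ :=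
  (PathsIn V × G) →₀ k

/-- The basis vector `p ⋊ g`. -/
def ιs (t : PathsIn V × G) : SmashCoalg k V G := Finsupp.single t 1

/-- Appending the arrow `e` to the path component of basis vectors `p ⋊ g`
(for `p` ending at the source of `e`), leaving the group component unchanged. -/
def consMapS {b c : V} (e : b ⟶ c) : SmashCoalg k V G →ₗ[k] SmashCoalg k V G :=
  Finsupp.lsum k fun t =>
    if h : t.1.2.1 = b then Finsupp.lsingle (⟨t.1.1, c, (h ▸ t.1.2.2).cons e⟩, t.2) else 0

/-- The value of the smash comultiplication on the basis vector `p ⋊ g`: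
`Δ(p ⋊ g) = Σ_{p = rq} (r ⋊ δ(q)g) ⊗ (q ⋊ g)`, where `q` runs over initial
segments of `p` (including the trivial decompositions). -/
def smashDeltaAux (δ : ∀ {a b : V}, (a ⟶ b) → G) (g : G) :
    ∀ {a b : V}, Quiver.Path a b → SmashCoalg k V G ⊗[k] SmashCoalg k V G
  | a, _, .nil => ιs k (⟨a, a, .nil⟩, g) ⊗ₜ[k] ιs k (⟨a, a, .nil⟩, g)
  | a, c, .cons p e =>
      ιs k (⟨c, c, .nil⟩, wt @δ (p.cons e) * g) ⊗ₜ[k] ιs k (⟨a, c, p.cons e⟩, g)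
      + TensorProduct.map (consMapS k e) LinearMap.id (smashDeltaAux @δ g p)

/-- The comultiplication of the smash coproduct coalgebra `kQ ⋊ kG`. -/
def smashDelta (δ : ∀ {a b : V}, (a ⟶ b) → G) :
    SmashCoalg k V G →ₗ[k] SmashCoalg k V G ⊗[k] SmashCoalg k V G :=
  Finsupp.lsum k fun t => LinearMap.toSpanSingleton k _ (smashDeltaAux k @δ t.2 t.1.2.2)

/-- The counit of `kQ ⋊ kG`: `ε(p ⋊ g) = δ_{|p|,0}`. -/
def smashEps : SmashCoalg k V G →ₗ[k] k :=
  Finsupp.lsum k fun t => if t.1.2.2.length = 0 then LinearMap.id else 0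

/-- The canonical projection `kQ ⋊ kG → kQ`, `p ⋊ g ↦ p`. -/
def smashProj : SmashCoalg k V G →ₗ[k] PathCoalg k V :=
  Finsupp.lsum k fun t => Finsupp.lsingle t.1

/-- The linear embedding `kQ → kQ ⋊ kG`, `b ↦ b ⋊ g`. -/
def embG (g : G) : PathCoalg k V →ₗ[k] SmashCoalg k V G :=
  Finsupp.lsum k fun t => Finsupp.lsingle (t, g)

/-- The smash coproduct quiver `Q ⋊ G` attached to an arrow weighting
`δ : Q₁ → G`: vertices are pairs `x ⋊ g`. -/
structure SmashQ (V : Type u) [Quiver.{v + 1} V] (G : Type*) [Group G]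
    (δ : ∀ {a b : V}, (a ⟶ b) → G) where
  v : V
  g : G

/-- Arrows of `Q ⋊ G`: `a ⋊ g` goes from `s(a) ⋊ g` to `t(a) ⋊ δ(a)g`. -/
instance {δ : ∀ {a b : V}, (a ⟶ b) → G} : Quiver (SmashQ V G @δ) :=
  ⟨fun p q => {e : p.v ⟶ q.v // q.g = δ e * p.g}⟩

/-- The lift of a path `p` of `Q` to the smash coproduct quiver `Q ⋊ G`,
starting at `s(p) ⋊ g`; the endpoint is `t(p) ⋊ δ(p)g`. -/
def liftPath (δ : ∀ {a b : V}, (a ⟶ b) → G) :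
    ∀ {a b : V}, Quiver.Path a b → ∀ g : G,
      Σ h : G, Quiver.Path (SmashQ.mk a g : SmashQ V G @δ) (SmashQ.mk b h)
  | _, _, .nil, g => ⟨g, .nil⟩
  | _, _, .cons p e, g =>
      ⟨δ e * (liftPath @δ p g).1, (liftPath @δ p g).2.cons ⟨e, rfl⟩⟩

/-- The linear map `E : kQ ⋊ kG → k(Q ⋊ G)` sending the basis vector `p ⋊ g`
to the lift of `p` starting at `s(p) ⋊ g`. -/
def Emap (δ : ∀ {a b : V}, (a ⟶ b) → G) :
    SmashCoalg k V G →ₗ[k] PathCoalg k (SmashQ V G @δ) :=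
  Finsupp.lsum k fun t =>
    LinearMap.toSpanSingleton k _
      (ιp k ⟨SmashQ.mk t.1.1 t.2, SmashQ.mk t.1.2.1 (liftPath @δ t.1.2.2 t.2).1,
        (liftPath @δ t.1.2.2 t.2).2⟩)

/-!
The smash coproduct quiver `Q ⋊ G` is a covering of `Q`: an arrow `a` of `Q` has exactly one lift
starting at a given vertex `s(a) ⋊ g`, namely `a ⋊ g`. So every path of `Q ⋊ G` is the unique lift
of its image in `Q` from its starting label, and `E` maps the basis `{p ⋊ g}` bijectively onto the
path basis of `k(Q ⋊ G)`, preserving lengths and hence counits. Cutting the lift of `p = rq` from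
`s(p) ⋊ g` yields the lift of `q` from `g` followed by the lift of `r` from `δ(q)g`, which is the
term `(r ⋊ δ(q)g) ⊗ (q ⋊ g)` of `Δ(p ⋊ g)`.
-/

section

open LinearMap

variable {δ : ∀ {a b : V}, (a ⟶ b) → G}

namespace SmashQ

def projPath : ∀ {x y : SmashQ V G @δ}, Path x y → Path x.v y.v
  | _, _, .nil => .nil
  | _, _, .cons P e => (projPath P).cons e.1

@[simp]
lemma projPath_nil (x : SmashQ V G @δ) : projPath (.nil : Path x x) = .nil := by
  rw [projPath]

@[simp]
lemma projPath_cons {x y z : SmashQ V G @δ} (P : Path x y) (e : y ⟶ z) :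
    projPath (P.cons e) = (projPath P).cons e.1 := by
  rw [projPath]

end SmashQ

@[simp]
lemma liftPath_nil (a : V) (g : G) : liftPath @δ (.nil : Path a a) g = ⟨g, .nil⟩ := by
  rw [liftPath]

@[simp]
lemma liftPath_cons {a b c : V} (p : Path a b) (e : b ⟶ c) (g : G) :
    liftPath @δ (p.cons e) g
      = ⟨δ e * (liftPath @δ p g).1, (liftPath @δ p g).2.cons ⟨e, rfl⟩⟩ := by
  rw [liftPath]

@[simp]
lemma wt_nil (a : V) : wt @δ (.nil : Path a a) = 1 := by
  rw [wt]

@[simp]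
lemma wt_cons {a b c : V} (p : Path a b) (e : b ⟶ c) : wt @δ (p.cons e) = δ e * wt @δ p := by
  rw [wt]

lemma liftPath_fst {a b : V} (p : Path a b) (g : G) : (liftPath @δ p g).1 = wt @δ p * g := by
  induction p with
  | nil => simp
  | cons p e ih => simp [ih, mul_assoc]

lemma length_liftPath {a b : V} (p : Path a b) (g : G) :
    (liftPath @δ p g).2.length = p.length := by
  induction p with
  | nil => rw [liftPath_nil]; rfl
  | cons p e ih => rw [liftPath_cons]; exact congrArg Nat.succ ih

lemma projPath_liftPath {a b : V} (p : Path a b) (g : G) :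
    SmashQ.projPath (liftPath @δ p g).2 = p := by
  induction p with
  | nil => rw [liftPath_nil, SmashQ.projPath_nil]
  | cons p e ih => rw [liftPath_cons, SmashQ.projPath_cons, ih]

lemma liftPath_projPath {x y : SmashQ V G @δ} (P : Path x y) :
    liftPath @δ (SmashQ.projPath P) x.g = ⟨y.g, P⟩ := by
  induction P with
  | nil => rw [SmashQ.projPath_nil, liftPath_nil]
  | @cons y z P e ih =>
    simp only [SmashQ.projPath_cons, liftPath_cons]
    generalize liftPath @δ (SmashQ.projPath P) x.g = L at ih ⊢
    subst ih
    obtain ⟨zv, zg⟩ := z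
    change {e : y.v ⟶ zv // zg = δ e * y.g} at e
    obtain ⟨e, rfl⟩ := e
    rfl

def liftPathEquiv (δ : ∀ {a b : V}, (a ⟶ b) → G) : PathsIn V × G ≃ PathsIn (SmashQ V G @δ) where
  toFun t := ⟨⟨t.1.1, t.2⟩, ⟨t.1.2.1, (liftPath @δ t.1.2.2 t.2).1⟩, (liftPath @δ t.1.2.2 t.2).2⟩
  invFun s := (⟨s.1.v, s.2.1.v, SmashQ.projPath s.2.2⟩, s.1.g)
  left_inv t := by
    obtain ⟨⟨a, b, p⟩, g⟩ := t
    simp only [projPath_liftPath]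
  right_inv s := by
    obtain ⟨x, y, P⟩ := s
    dsimp only
    rw [liftPath_projPath]

lemma SmashCoalg.hom_ext {X M : Type*} [AddCommMonoid M] [Module k M]
    {f f' : SmashCoalg k V X →ₗ[k] M}
    (h : ∀ (a b : V) (p : Path a b) (g : X), f (ιs k (⟨a, b, p⟩, g)) = f' (ιs k (⟨a, b, p⟩, g))) :
    f = f' :=
  Finsupp.lhom_ext' fun ⟨⟨a, b, p⟩, g⟩ => ext_ring (h a b p g)

lemma Emap_ιs {a b : V} (p : Path a b) (g : G) :
    Emap k @δ (ιs k (⟨a, b, p⟩, g))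
      = ιp k ⟨⟨a, g⟩, ⟨b, (liftPath @δ p g).1⟩, (liftPath @δ p g).2⟩ := by
  rw [Emap, ιs, Finsupp.lsum_single, toSpanSingleton_apply, one_smul]

lemma Emap_eq_domLCongr :
    Emap k @δ = (Finsupp.domLCongr (liftPathEquiv @δ) : SmashCoalg k V G ≃ₗ[k] _).toLinearMap := by
  refine SmashCoalg.hom_ext k fun _ _ p g => ?_
  rw [Emap_ιs, LinearEquiv.coe_coe, ιs, Finsupp.domLCongr_single]
  rfl

lemma ΔP_ιp (t : PathsIn V) : ΔP k (ιp k t) = deltaAux k t.2.2 := by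
  rw [ΔP, ιp, Finsupp.lsum_single, toSpanSingleton_apply, one_smul]

lemma smashDelta_ιs (t : PathsIn V × G) :
    smashDelta k @δ (ιs k t) = smashDeltaAux k @δ t.2 t.1.2.2 := by
  rw [smashDelta, ιs, Finsupp.lsum_single, toSpanSingleton_apply, one_smul]

lemma εP_ιp (t : PathsIn V) : εP k (ιp k t) = if t.2.2.length = 0 then 1 else 0 := by
  rw [εP, ιp, Finsupp.lsum_single]
  split_ifs <;> rfl

lemma smashEps_ιs {X : Type*} (t : PathsIn V × X) :
    smashEps k (ιs k t) = if t.1.2.2.length = 0 then 1 else 0 := by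
  rw [smashEps, ιs, Finsupp.lsum_single]
  split_ifs <;> rfl

lemma consMap_ιp {b c : V} (e : b ⟶ c) (t : PathsIn V) :
    consMap k e (ιp k t) = if h : t.2.1 = b then ιp k ⟨t.1, c, (h ▸ t.2.2).cons e⟩ else 0 := by
  rw [consMap, ιp, Finsupp.lsum_single]
  split_ifs <;> rfl

lemma consMapS_ιs {X : Type*} {b c : V} (e : b ⟶ c) (t : PathsIn V × X) :
    consMapS k e (ιs k t)
      = if h : t.1.2.1 = b then ιs k (⟨t.1.1, c, (h ▸ t.1.2.2).cons e⟩, t.2) else 0 := by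
  rw [consMapS, ιs, Finsupp.lsum_single]
  split_ifs <;> rfl

lemma deltaAux_nil (a : V) :
    deltaAux k (.nil : Path a a) = ιp k ⟨a, a, .nil⟩ ⊗ₜ ιp k ⟨a, a, .nil⟩ := by
  rw [deltaAux]

lemma deltaAux_cons {a b c : V} (p : Path a b) (e : b ⟶ c) :
    deltaAux k (p.cons e)
      = ιp k ⟨c, c, .nil⟩ ⊗ₜ ιp k ⟨a, c, p.cons e⟩ + (consMap k e).rTensor _ (deltaAux k p) := by
  rw [deltaAux, rTensor_def]

lemma smashDeltaAux_nil (a : V) (g : G) :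
    smashDeltaAux k @δ g (.nil : Path a a) = ιs k (⟨a, a, .nil⟩, g) ⊗ₜ ιs k (⟨a, a, .nil⟩, g) := by
  rw [smashDeltaAux]

lemma smashDeltaAux_cons {a b c : V} (p : Path a b) (e : b ⟶ c) (g : G) :
    smashDeltaAux k @δ g (p.cons e)
      = ιs k (⟨c, c, .nil⟩, wt @δ (p.cons e) * g) ⊗ₜ ιs k (⟨a, c, p.cons e⟩, g)
        + (consMapS k e).rTensor _ (smashDeltaAux k @δ g p) := by
  rw [smashDeltaAux, rTensor_def]

/-- The left factors `q ⋊ h` of `Δ(p ⋊ g)` all end at the same label `δ(q)h = δ(p)g`. -/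
lemma rTensor_smashDeltaAux_congr {M : Type*} [AddCommMonoid M] [Module k M] {a b : V}
    (p : Path a b) (g : G) {f f' : SmashCoalg k V G →ₗ[k] M}
    (hff' : ∀ (q : PathsIn V) (h : G), wt @δ q.2.2 * h = wt @δ p * g →
      f (ιs k (q, h)) = f' (ιs k (q, h))) :
    f.rTensor _ (smashDeltaAux k @δ g p) = f'.rTensor _ (smashDeltaAux k @δ g p) := by
  induction p generalizing f f' with
  | nil => rw [smashDeltaAux_nil, rTensor_tmul, rTensor_tmul, hff' _ g rfl]
  | cons p e ih =>
    rw [smashDeltaAux_cons, map_add, map_add, rTensor_tmul, rTensor_tmul,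
      hff' _ _ (by rw [wt_nil, one_mul]), ← rTensor_comp_apply, ← rTensor_comp_apply, ih]
    rintro ⟨x, y, q⟩ h hq
    rw [comp_apply, comp_apply, consMapS_ιs]
    split_ifs with hy
    · subst hy
      exact hff' _ h (by simp only [wt_cons, mul_assoc, hq])
    · rw [map_zero, map_zero]

lemma consMap_Emap_ιs {b c : V} (e : b ⟶ c) (q : PathsIn V) (h u : G)
    (hu : (liftPath @δ q.2.2 h).1 = u) :
    consMap k (⟨e, rfl⟩ : (⟨b, u⟩ : SmashQ V G @δ) ⟶ ⟨c, δ e * u⟩) (Emap k @δ (ιs k (q, h)))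
      = Emap k @δ (consMapS k e (ιs k (q, h))) := by
  subst hu
  obtain ⟨x, y, q⟩ := q
  rw [Emap_ιs, consMap_ιp, consMapS_ιs]
  by_cases hy : y = b
  · subst hy
    rw [dif_pos rfl, dif_pos rfl, Emap_ιs, liftPath_cons]
  · rw [dif_neg (fun h => hy (congrArg SmashQ.v h)), dif_neg hy, map_zero]

lemma deltaAux_liftPath {a b : V} (p : Path a b) (g : G) :
    deltaAux k (liftPath @δ p g).2 = map (Emap k @δ) (Emap k @δ) (smashDeltaAux k @δ g p) := by
  induction p with
  | nil => rw [liftPath_nil, deltaAux_nil, smashDeltaAux_nil, map_tmul, Emap_ιs, liftPath_nil]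
  | cons p e ih =>
    rw [liftPath_cons]
    dsimp only
    rw [deltaAux_cons, smashDeltaAux_cons, map_add, map_tmul, Emap_ιs, Emap_ιs, liftPath_nil,
      liftPath_cons, ih, rTensor_map, map_rTensor, ← lTensor_comp_rTensor,
      ← lTensor_comp_rTensor, comp_apply, comp_apply]
    congr 2
    · rw [liftPath_fst, wt_cons, mul_assoc]
    refine rTensor_smashDeltaAux_congr k p g fun q h hq => ?_
    rw [comp_apply, comp_apply]
    exact consMap_Emap_ιs k e q h _ (by rw [liftPath_fst, liftPath_fst, hq])

lemma ΔP_comp_Emap :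
    ΔP k ∘ₗ Emap k @δ = map (Emap k @δ) (Emap k @δ) ∘ₗ smashDelta k @δ := by
  refine SmashCoalg.hom_ext k fun _ _ p g => ?_
  rw [comp_apply, comp_apply, Emap_ιs, ΔP_ιp, smashDelta_ιs]
  exact deltaAux_liftPath k p g

lemma εP_comp_Emap : εP k ∘ₗ Emap k @δ = smashEps k := by
  refine SmashCoalg.hom_ext k fun _ _ p g => ?_
  rw [comp_apply, Emap_ιs, εP_ιp, smashEps_ιs, length_liftPath]

end

/-- The map `E : kQ ⋊ kG → k(Q ⋊ G)`, sending `p ⋊ g` (for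
`p = a_n ⋯ a_1`) to the path `(a_n ⋊ δ(a_{n-1}⋯a_1)g) ⋯ (a₂ ⋊ δ(a₁)g)(a₁ ⋊ g)`
of the smash coproduct quiver, is an isomorphism of coalgebras. -/
theorem smash_coalgebra_iso_path_coalgebra (δ : ∀ {a b : V}, (a ⟶ b) → G) :
    Function.Bijective (Emap k @δ)
    ∧ (∀ x : SmashCoalg k V G,
        ΔP k (Emap k @δ x)
          = TensorProduct.map (Emap k @δ) (Emap k @δ) (smashDelta k @δ x))
    ∧ (∀ x : SmashCoalg k V G, εP k (Emap k @δ x) = smashEps k x) := by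
  refine ⟨?_, LinearMap.congr_fun (ΔP_comp_Emap k), LinearMap.congr_fun (εP_comp_Emap k)⟩
  rw [Emap_eq_domLCongr]
  exact LinearEquiv.bijective _
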